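/- Let a_1, ..., a_m ∈ ℝ^n be unit vectors with pairwise incoherence |⟨a_i, a_j⟩| ≤ μ for all i ≠ j. Let B be the m×n³ matrix whose i-th row is the flattening of a_i^{⊗3}. Then ‖B Bᵀ‖ ≤ 1 + m·μ³, and hence ‖B‖² ≤ 1 + m·μ³. -/

import Mathlib

open scoped RealInnerProductSpace

open Matrix
open scoped Matrix.Norms.L2Operator

/-!
The Gram matrix `B Bᵀ` has entries `⟪a i, a j⟫ ^ 3`: ones on the diagonal and at most `μ ^ 3`
in absolute value off it, so each absolute row sum is at most `1 + m μ ^ 3`. For a symmetric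
matrix the Schur test (Cauchy–Schwarz with weights `|A i j|`) bounds the spectral norm by the
largest absolute row sum, which is the Gershgorin bound. Finally `‖B‖ ^ 2 = ‖B Bᵀ‖` is the
C⋆-identity.
-/

namespace Matrix

variable {𝕜 : Type*} [RCLike 𝕜] {m n : Type*} [Fintype m] [Fintype n] [DecidableEq n]

theorem l2_opNorm_le_sqrt_of_sum_norm_le (A : Matrix m n 𝕜) {r c : ℝ} (hr : 0 ≤ r)
    (hrow : ∀ i, ∑ j, ‖A i j‖ ≤ r) (hcol : ∀ j, ∑ i, ‖A i j‖ ≤ c) :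
    ‖A‖ ≤ √(r * c) := by
  refine ContinuousLinearMap.opNorm_le_bound _ (Real.sqrt_nonneg _) fun x ↦ ?_
  rw [← Real.sqrt_sq (norm_nonneg x), ← Real.sqrt_mul' _ (sq_nonneg _)]
  refine Real.le_sqrt_of_sq_le ?_
  have hentry : ∀ i, ‖(A *ᵥ x) i‖ ^ 2 ≤ r * ∑ j, ‖A i j‖ * ‖x j‖ ^ 2 := fun i ↦
    calc ‖(A *ᵥ x) i‖ ^ 2 ≤ (∑ j, ‖A i j‖ * ‖x j‖) ^ 2 := by
          gcongr; exact (norm_sum_le _ _).trans_eq (by simp only [norm_mul])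
      _ ≤ (∑ j, ‖A i j‖) * ∑ j, ‖A i j‖ * ‖x j‖ ^ 2 :=
          Finset.sum_sq_le_sum_mul_sum_of_sq_le_mul _ (fun _ _ ↦ norm_nonneg _)
            (fun _ _ ↦ by positivity) fun _ _ ↦ le_of_eq (by ring)
      _ ≤ r * ∑ j, ‖A i j‖ * ‖x j‖ ^ 2 := by gcongr; exact hrow i
  calc ‖toEuclideanLin A x‖ ^ 2 = ∑ i, ‖(A *ᵥ x) i‖ ^ 2 := EuclideanSpace.norm_sq_eq _
    _ ≤ ∑ i, r * ∑ j, ‖A i j‖ * ‖x j‖ ^ 2 := Finset.sum_le_sum fun i _ ↦ hentry i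
    _ = r * ∑ j, (∑ i, ‖A i j‖) * ‖x j‖ ^ 2 := by
          simp only [← Finset.mul_sum, Finset.sum_mul]; rw [Finset.sum_comm]
    _ ≤ r * ∑ j, c * ‖x j‖ ^ 2 := by gcongr with j; exact hcol j
    _ = r * c * ‖x‖ ^ 2 := by rw [EuclideanSpace.norm_sq_eq, ← Finset.mul_sum, mul_assoc]

theorem IsHermitian.l2_opNorm_le_of_sum_norm_le {A : Matrix n n 𝕜} (hA : A.IsHermitian)
    {r : ℝ} (hr : 0 ≤ r) (hrow : ∀ i, ∑ j, ‖A i j‖ ≤ r) : ‖A‖ ≤ r := by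
  have hcol : ∀ j, ∑ i, ‖A i j‖ ≤ r := fun j ↦ by
    simpa only [← hA.apply j, norm_star] using hrow j
  simpa [Real.sqrt_mul_self hr] using A.l2_opNorm_le_sqrt_of_sum_norm_le hr hrow hcol

theorem l2_opNorm_mul_conjTranspose_self [DecidableEq m] (A : Matrix m n 𝕜) :
    ‖A * Aᴴ‖ = ‖A‖ * ‖A‖ := by
  simpa only [conjTranspose_conjTranspose, l2_opNorm_conjTranspose] using
    l2_opNorm_conjTranspose_mul_self Aᴴ

theorem sum_norm_row_le (A : Matrix n n 𝕜) (i : n) {d c : ℝ}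
    (hdiag : ‖A i i‖ ≤ d) (hoff : ∀ j, j ≠ i → ‖A i j‖ ≤ c) :
    ∑ j, ‖A i j‖ ≤ d + (Fintype.card n - 1) * c := by
  rw [← Finset.add_sum_erase _ _ (Finset.mem_univ i)]
  gcongr
  calc ∑ j ∈ Finset.univ.erase i, ‖A i j‖ ≤ (Finset.univ.erase i).card • c :=
        Finset.sum_le_card_nsmul _ _ _ fun j hj ↦ hoff j (Finset.ne_of_mem_erase hj)
    _ = (Fintype.card n - 1) * c := by
        rw [Finset.card_erase_of_mem (Finset.mem_univ i), nsmul_eq_mul, Finset.card_univ,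
          Nat.cast_pred (Fintype.card_pos_iff.mpr ⟨i⟩)]

end Matrix

/-- The flattening of `u ⊗ u ⊗ u`, the rows of the paper's matrix `B`. -/
def tensorCube {n R : Type*} [Mul R] (u : n → R) : n × n × n → R :=
  fun p ↦ u p.1 * u p.2.1 * u p.2.2

theorem tensorCube_dotProduct_tensorCube {n R : Type*} [Fintype n] [CommSemiring R]
    (u v : n → R) : tensorCube u ⬝ᵥ tensorCube v = (u ⬝ᵥ v) ^ 3 := by
  simp only [dotProduct, tensorCube, Fintype.sum_prod_type, pow_three, Finset.mul_sum,
    Finset.sum_mul]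
  refine Finset.sum_congr rfl fun _ _ ↦ Finset.sum_congr rfl fun _ _ ↦
    Finset.sum_congr rfl fun _ _ ↦ by ring

theorem tensor_gram_norm_bound (m n : ℕ) (μ : ℝ) (hμ : 0 ≤ μ)
    (a : Fin m → EuclideanSpace ℝ (Fin n))
    (ha : ∀ i, ‖a i‖ = 1)
    (hinc : ∀ i j, i ≠ j → |⟪a i, a j⟫| ≤ μ)
    (B : Matrix (Fin m) (Fin n × Fin n × Fin n) ℝ)
    (hB : ∀ i p, B i p = a i p.1 * a i p.2.1 * a i p.2.2) :
    ‖B * Bᵀ‖ ≤ 1 + m * μ^3 ∧ ‖B‖^2 ≤ 1 + m * μ^3 := by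
  have hBT : Bᵀ = Bᴴ := (conjTranspose_eq_transpose_of_trivial B).symm
  have hgram : ∀ i j, (B * Bᵀ) i j = ⟪a i, a j⟫ ^ 3 := fun i j ↦ by
    have hBrow : ∀ k, B k = tensorCube (a k) := fun k ↦ funext (hB k)
    rw [mul_apply, EuclideanSpace.inner_eq_star_dotProduct, star_trivial, dotProduct_comm,
      ← tensorCube_dotProduct_tensorCube, ← hBrow, ← hBrow]
    rfl
  have hrow : ∀ i, ∑ j, ‖(B * Bᵀ) i j‖ ≤ 1 + m * μ ^ 3 := fun i ↦ by
    refine ((B * Bᵀ).sum_norm_row_le i (d := 1) (c := μ ^ 3) ?_ fun j hji ↦ ?_).trans ?_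
    · rw [hgram, real_inner_self_eq_norm_sq, ha]; norm_num
    · rw [hgram, norm_pow, Real.norm_eq_abs]
      exact pow_le_pow_left₀ (abs_nonneg _) (hinc i j hji.symm) 3
    · rw [Fintype.card_fin]; linarith [pow_nonneg hμ 3]
  have hGram : ‖B * Bᵀ‖ ≤ 1 + m * μ ^ 3 := by
    rw [hBT] at hrow ⊢
    exact (isHermitian_mul_conjTranspose_self B).l2_opNorm_le_of_sum_norm_le (by positivity) hrow
  refine ⟨hGram, ?_⟩
  rwa [sq, ← l2_opNorm_mul_conjTranspose_self, ← hBT]
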